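/- arXiv:0712.1324 — 3 statements merged into one kernel-verified Lean document; each statement's English description precedes it below -/
import Mathlib

section
/- Let A be a connected DG algebra, and let M, N be minimal semifree left DG A-modules whose semibases consist of elements of degree 0, with standard semifree filtrations 0 ⊆ M(0) ⊆ M(1) ⊆ ··· and 0 ⊆ N(0) ⊆ N(1) ⊆ ···. Then any morphism of DG A-modules f : M → N preserves the filtrations, i.e., f(M(n)) ⊆ N(n) for all n ≥ 0. -/
open scoped TensorProduct

variable (k : Type) [Field k]

/-- A (cochain) differential graded algebra over `k`: a `ℤ`-graded `k`-algebra
together with a degree `1` differential which is a graded derivation. -/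
structure DGA where
  A : Type
  [ringA : Ring A]
  [algA : Algebra k A]
  grading : ℤ → Submodule k A
  [gradedA : GradedAlgebra grading]
  d : A →ₗ[k] A
  d_deg : ∀ (n : ℤ) (a : A), a ∈ grading n → d a ∈ grading (n + 1)
  d_sq : ∀ a : A, d (d a) = 0
  leibniz : ∀ (i : ℤ) (a b : A), a ∈ grading i →
      d (a * b) = d a * b + (Int.negOnePow i : ℤ) • (a * d b)

attribute [instance] DGA.ringA DGA.algA DGA.gradedA

variable {k}

/-- A DG algebra is connected if it is concentrated in non-negative degrees
and its degree `0` part is `k·1`. -/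
def DGA.connected (𝔸 : DGA k) : Prop :=
  (∀ n : ℤ, n < 0 → 𝔸.grading n = ⊥) ∧ 𝔸.grading 0 = Submodule.span k {(1 : 𝔸.A)}

/-- An augmentation of a DG algebra: an algebra map to `k` killing the image of the
differential and all nonzero degrees.  (For a connected DG algebra this is the canonical
projection onto degree `0`.) -/
structure DGA.Aug (𝔸 : DGA k) where
  ε : 𝔸.A →ₐ[k] k
  ε_d : ∀ a, ε (𝔸.d a) = 0
  ε_deg : ∀ n : ℤ, n ≠ 0 → ∀ a ∈ 𝔸.grading n, ε a = 0

/-- A (left) differential graded module over a DG algebra. -/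
structure DGMod (𝔸 : DGA k) where
  M : Type
  [acg : AddCommGroup M]
  [amod : Module 𝔸.A M]
  [kmod : Module k M]
  [tower : IsScalarTower k 𝔸.A M]
  grading : ℤ → Submodule k M
  [decomp : DirectSum.Decomposition grading]
  smul_mem : ∀ (i j : ℤ) (a : 𝔸.A) (m : M), a ∈ 𝔸.grading i → m ∈ grading j →
      a • m ∈ grading (i + j)
  dM : M →ₗ[k] M
  dM_deg : ∀ (n : ℤ) (m : M), m ∈ grading n → dM m ∈ grading (n + 1)
  dM_sq : ∀ m : M, dM (dM m) = 0
  leibniz : ∀ (i : ℤ) (a : 𝔸.A) (m : M), a ∈ 𝔸.grading i →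
      dM (a • m) = 𝔸.d a • m + (Int.negOnePow i : ℤ) • (a • dM m)

attribute [instance] DGMod.acg DGMod.amod DGMod.kmod DGMod.tower DGMod.decomp

/-- The submodule `I(A)·M` where `I(A) = ker ε` is the augmentation ideal. -/
def DGMod.IP {𝔸 : DGA k} (ε : 𝔸.Aug) (P : DGMod 𝔸) : Submodule 𝔸.A P.M :=
  Submodule.span 𝔸.A {x | ∃ (a : 𝔸.A) (m : P.M), ε.ε a = 0 ∧ x = a • m}

/-- A DG module is minimal if `d(M) ⊆ I(A)·M`. -/
def DGMod.Minimal {𝔸 : DGA k} (ε : 𝔸.Aug) (P : DGMod 𝔸) : Prop :=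
  ∀ m : P.M, P.dM m ∈ P.IP ε

/-- A semifree resolution of the trivial DG module `k` over an augmented DG algebra:
a semifree DG module (with a chosen semibasis, witnessing semifreeness) together with a
quasi-isomorphism `εP` onto the trivial module `k` (concentrated in degree `0`,
with `A` acting via the augmentation). -/
structure SFR {𝔸 : DGA k} (ε : 𝔸.Aug) extends DGMod 𝔸 where
  ι : Type
  bas : Module.Basis ι 𝔸.A M
  degB : ι → ℤ
  homog : ∀ i, bas i ∈ grading (degB i)
  lvl : ι → ℕ
  d_lvl : ∀ i, dM (bas i) ∈ Submodule.span 𝔸.A (bas '' {j | lvl j < lvl i})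
  εP : M →ₗ[k] k
  εP_lin : ∀ (a : 𝔸.A) (m : M), εP (a • m) = ε.ε a * εP m
  εP_deg : ∀ n : ℤ, n ≠ 0 → ∀ m ∈ grading n, εP m = 0
  εP_d : ∀ m, εP (dM m) = 0
  qis_surj : ∃ m ∈ grading 0, dM m = 0 ∧ εP m = 1
  qis_ker : ∀ (n : ℤ) (m : M), m ∈ grading n → dM m = 0 → εP m = 0 →
      m ∈ LinearMap.range dM

/-- `Ext^n_A(k,k) = 0`, expressed via a semifree resolution `P` of `k`: every
`A`-semilinear functional `P → k` of cohomological degree `n` which is a cocycle is a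
coboundary in `Hom_A(P,k)`. -/
def ExtVanishAt {𝔸 : DGA k} (ε : 𝔸.Aug) (P : SFR ε) (n : ℤ) : Prop :=
  ∀ f : P.M →ₗ[k] k,
    (∀ (a : 𝔸.A) (m : P.M), f (a • m) = ε.ε a * f m) →
    (∀ i : ℤ, i ≠ -n → ∀ m ∈ P.grading i, f m = 0) →
    (∀ m, f (P.dM m) = 0) →
    ∃ g : P.M →ₗ[k] k,
      (∀ (a : 𝔸.A) (m : P.M), g (a • m) = ε.ε a * g m) ∧
      (∀ i : ℤ, i ≠ -(n - 1) → ∀ m ∈ P.grading i, g m = 0) ∧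
      ∀ m, f m = g (P.dM m)

/-- `Ext^n_A(k,k) = 0` for all `n ≠ 0` (the Koszul property, via Proposition 1.1). -/
def ExtVanish (𝔸 : DGA k) (ε : 𝔸.Aug) : Prop :=
  ∀ P : SFR ε, ∀ n : ℤ, n ≠ 0 → ExtVanishAt ε P n

/-- `Tor^n_A(k,k) = 0` for `n ≠ 0`: for any semifree resolution `P` of `k`, the complex
`k ⊗_A P = P/I(A)P` has vanishing cohomology in nonzero degrees. -/
def TorVanish (𝔸 : DGA k) (ε : 𝔸.Aug) : Prop :=
  ∀ P : SFR ε, ∀ n : ℤ, n ≠ 0 → ∀ m ∈ P.grading n,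
    P.dM m ∈ P.toDGMod.IP ε →
      ∃ y ∈ P.grading (n - 1), m - P.dM y ∈ P.toDGMod.IP ε

/-- `A` is a Koszul DG algebra: the trivial DG module `k` has a minimal semifree
resolution whose semibasis consists of elements of degree `0`. -/
def IsKoszul (𝔸 : DGA k) (ε : 𝔸.Aug) : Prop :=
  ∃ P : SFR ε, P.toDGMod.Minimal ε ∧ ∀ i, P.degB i = 0

/-- A presentation of the cohomology algebra `H(𝔸)` by a DG algebra `𝔹` (with zero
differential): a map defined on cocycles of `𝔸`, multiplicative, additive, grading
preserving, surjective, with kernel exactly the coboundaries. -/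
structure HPres (𝔸 𝔹 : DGA k) where
  φ : 𝔸.A → 𝔹.A
  map_add : ∀ a b, 𝔸.d a = 0 → 𝔸.d b = 0 → φ (a + b) = φ a + φ b
  map_smul : ∀ (c : k) (a), 𝔸.d a = 0 → φ (c • a) = c • φ a
  map_mul : ∀ a b, 𝔸.d a = 0 → 𝔸.d b = 0 → φ (a * b) = φ a * φ b
  map_one : φ 1 = 1
  surj : ∀ n : ℤ, ∀ y ∈ 𝔹.grading n, ∃ a, 𝔸.d a = 0 ∧ a ∈ 𝔸.grading n ∧ φ a = y
  ker : ∀ a, 𝔸.d a = 0 → (φ a = 0 ↔ a ∈ LinearMap.range 𝔸.d)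
  graded : ∀ (n : ℤ) (a), 𝔸.d a = 0 → a ∈ 𝔸.grading n → φ a ∈ 𝔹.grading n

/-- The `k`-span of the semibasis of `P`. -/
def SFR.kE {𝔸 : DGA k} {ε : 𝔸.Aug} (P : SFR ε) : Submodule k P.M :=
  Submodule.span k (Set.range P.bas)

/-- The standard semifree filtration of `P` associated to its semibasis:
`F(0) = A·(kE ∩ ker d)` and `F(n+1) = A·(kE ∩ d⁻¹ F(n))`. -/
def SFR.stdF {𝔸 : DGA k} {ε : 𝔸.Aug} (P : SFR ε) : ℕ → Submodule 𝔸.A P.M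
  | 0 => Submodule.span 𝔸.A ((P.kE ⊓ LinearMap.ker P.dM : Submodule k P.M) : Set P.M)
  | n + 1 => Submodule.span 𝔸.A
      ((P.kE ⊓ Submodule.comap P.dM ((SFR.stdF P n).restrictScalars k) :
        Submodule k P.M) : Set P.M)

/-- The underlying space of the Ext-algebra `E = Ext⁰_A(k,k)` of a Koszul DG algebra,
realized as the `A`-semilinear degree `0` cocycle functionals on a (minimal) semifree
resolution `P` of `k`. -/
def ExtSpace {𝔸 : DGA k} {ε : 𝔸.Aug} (P : SFR ε) : Submodule k (P.M →ₗ[k] k) where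
  carrier := {f | (∀ (a : 𝔸.A) (m : P.M), f (a • m) = ε.ε a * f m) ∧
      (∀ n : ℤ, n ≠ 0 → ∀ m ∈ P.grading n, f m = 0) ∧ ∀ m, f (P.dM m) = 0}
  add_mem' := by
    rintro f g ⟨hf1, hf2, hf3⟩ ⟨hg1, hg2, hg3⟩
    refine ⟨fun a m => ?_, fun n hn m hm => ?_, fun m => ?_⟩
    · simp [hf1, hg1, mul_add]
    · simp [hf2 n hn m hm, hg2 n hn m hm]
    · simp [hf3, hg3]
  zero_mem' := by
    exact ⟨fun a m => by simp, fun n hn m hm => rfl, fun m => rfl⟩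
  smul_mem' := by
    rintro c f ⟨hf1, hf2, hf3⟩
    refine ⟨fun a m => ?_, fun n hn m hm => ?_, fun m => ?_⟩
    · simp [hf1, mul_left_comm]
    · simp [hf2 n hn m hm]
    · simp [hf3]

/-- The unit of the Ext-algebra: the class of the resolution map `εP` itself. -/
def unitE {𝔸 : DGA k} {ε : 𝔸.Aug} (P : SFR ε) : ↥(ExtSpace P) :=
  ⟨P.εP, P.εP_lin, P.εP_deg, P.εP_d⟩

/-- `g : P → P` is a lift (through the resolution `εP : P → k`) of the Ext-class `x`:
an `A`-linear chain map of degree `0` with `εP ∘ g = x`. -/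
def IsLift {𝔸 : DGA k} {ε : 𝔸.Aug} (P : SFR ε) (g : P.M →ₗ[k] P.M)
    (x : ↥(ExtSpace P)) : Prop :=
  (∀ (a : 𝔸.A) (m : P.M), g (a • m) = a • g m) ∧
  (∀ n : ℤ, ∀ m ∈ P.grading n, g m ∈ P.grading n) ∧
  (∀ m, g (P.dM m) = P.dM (g m)) ∧
  (∀ m, (x : P.M →ₗ[k] k) m = P.εP (g m))

/-- `mul` is the Yoneda (composition) product on `E = Ext⁰_A(k,k)`:
`y·x = y ∘ g` for any lift `g` of `x`. -/
def MulCompat {𝔸 : DGA k} {ε : 𝔸.Aug} (P : SFR ε)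
    (mul : ↥(ExtSpace P) → ↥(ExtSpace P) → ↥(ExtSpace P)) : Prop :=
  ∀ (y x : ↥(ExtSpace P)) (g : P.M →ₗ[k] P.M), IsLift P g x →
    ∀ m, (↑(mul y x) : P.M →ₗ[k] k) m = (↑y : P.M →ₗ[k] k) (g m)

/-- `mul` makes `E` an associative unital `k`-algebra with unit `εP`, and is the
Yoneda product. -/
structure ExtMulOk {𝔸 : DGA k} {ε : 𝔸.Aug} (P : SFR ε)
    (mul : ↥(ExtSpace P) → ↥(ExtSpace P) → ↥(ExtSpace P)) : Prop where
  compat : MulCompat P mul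
  add_left : ∀ y₁ y₂ x, mul (y₁ + y₂) x = mul y₁ x + mul y₂ x
  add_right : ∀ y x₁ x₂, mul y (x₁ + x₂) = mul y x₁ + mul y x₂
  smul_left : ∀ (c : k) y x, mul (c • y) x = c • mul y x
  smul_right : ∀ (c : k) y x, mul y (c • x) = c • mul y x
  assoc : ∀ z y x, mul (mul z y) x = mul z (mul y x)
  one_mul : ∀ x, mul (unitE P) x = x
  mul_one : ∀ x, mul x (unitE P) = x

/-- The canonical decreasing filtration on the Ext-algebra: `F₀ = E` and
`F_{n+1} = {x ∈ E | x` vanishes on the standard filtration step `P(n)}`. -/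
noncomputable def Fil {𝔸 : DGA k} {ε : 𝔸.Aug} (P : SFR ε) : ℕ → Submodule k ↥(ExtSpace P)
  | 0 => ⊤
  | n + 1 => ⨅ (m : P.M) (_ : m ∈ P.stdF n),
      LinearMap.ker ((LinearMap.applyₗ m).comp (ExtSpace P).subtype)


theorem Fil_zero {𝔸 : DGA k} {ε : 𝔸.Aug} (P : SFR ε) : Fil P 0 = ⊤ := rfl

attribute [irreducible] ExtSpace Fil

instance {𝔸 : DGA k} {ε : 𝔸.Aug} (P : SFR ε) : AddCommGroup ↥(ExtSpace P) :=
  inferInstance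

instance {𝔸 : DGA k} {ε : 𝔸.Aug} (P : SFR ε) : Module k ↥(ExtSpace P) :=
  inferInstance

noncomputable instance {𝔸 : DGA k} {ε : 𝔸.Aug} (P : SFR ε) (n : ℕ) :
    AddCommGroup ↥(Fil P n) := inferInstance

noncomputable instance {𝔸 : DGA k} {ε : 𝔸.Aug} (P : SFR ε) (n : ℕ) :
    Module k ↥(Fil P n) := inferInstance

/-! Since `A` is connected, the degree `0` part of `P = A ⊗ kE` is `A⁰ ⊗ kE = kE` when the
semibasis sits in degree `0`. A degree-preserving chain map therefore sends `kE` into `kE`,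
and being `A`-linear and commuting with `d` it respects each step `A ⊗ (kE ∩ d⁻¹ F(n-1))` of
the standard filtration. -/

section

variable {𝔸 : DGA k} {ε : 𝔸.Aug}

theorem DGMod.decompose_smul_of_mem_zero (P : DGMod 𝔸) (a : 𝔸.A) {m : P.M}
    (hm : m ∈ P.grading 0) :
    (DirectSum.decompose P.grading (a • m) 0 : P.M) =
      (DirectSum.decompose 𝔸.grading a 0 : 𝔸.A) • m := by
  classical
  have hmem : ∀ j, (DirectSum.decompose 𝔸.grading a j : 𝔸.A) • m ∈ P.grading j := fun j => by
    simpa using P.smul_mem j 0 _ _ (DirectSum.decompose 𝔸.grading a j).2 hm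
  conv_lhs => rw [← DirectSum.sum_support_decompose 𝔸.grading a, Finset.sum_smul]
  rw [DirectSum.decompose_sum, DFinsupp.finsetSum_apply, AddSubmonoidClass.coe_finsetSum,
    Finset.sum_eq_single 0]
  · exact DirectSum.decompose_of_mem_same _ (hmem 0)
  · exact fun j _ hj => DirectSum.decompose_of_mem_ne _ (hmem j) hj
  · intro h0
    rw [DFinsupp.notMem_support_iff.mp h0, ZeroMemClass.coe_zero, zero_smul,
      DirectSum.decompose_zero, DirectSum.zero_apply, ZeroMemClass.coe_zero]

theorem SFR.kE_le_grading_zero (P : SFR ε) (hdeg : ∀ i, P.degB i = 0) :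
    P.kE ≤ P.grading 0 := by
  rw [SFR.kE, Submodule.span_le]
  rintro _ ⟨i, rfl⟩
  exact hdeg i ▸ P.homog i

theorem SFR.grading_zero_le_kE (hconn : 𝔸.connected) (P : SFR ε)
    (hdeg : ∀ i, P.degB i = 0) : P.grading 0 ≤ P.kE := by
  intro m hm
  have hterm : ∀ (a : 𝔸.A) (i : P.ι),
      (DirectSum.decompose P.grading (a • P.bas i) 0 : P.M) ∈ P.kE := by
    intro a i
    rw [P.decompose_smul_of_mem_zero a (hdeg i ▸ P.homog i)]
    have ha₀ : (DirectSum.decompose 𝔸.grading a 0 : 𝔸.A) ∈ Submodule.span k {1} :=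
      hconn.2 ▸ (DirectSum.decompose 𝔸.grading a 0).2
    obtain ⟨c, hc⟩ := Submodule.mem_span_singleton.mp ha₀
    rw [← hc, smul_assoc, one_smul]
    exact Submodule.smul_mem _ c (Submodule.subset_span ⟨i, rfl⟩)
  rw [← DirectSum.decompose_of_mem_same P.grading hm, ← P.bas.linearCombination_repr m,
    Finsupp.linearCombination_apply, Finsupp.sum, DirectSum.decompose_sum,
    DFinsupp.finsetSum_apply, AddSubmonoidClass.coe_finsetSum]
  exact Submodule.sum_mem _ fun i _ => hterm _ i

theorem SFR.stdF_le_comap (M N : SFR ε) (f : M.M →ₗ[𝔸.A] N.M)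
    (hkE : ∀ x ∈ M.kE, f x ∈ N.kE) (hchain : ∀ m, f (M.dM m) = N.dM (f m)) :
    ∀ n, M.stdF n ≤ (N.stdF n).comap f
  | 0 => by
    rw [SFR.stdF, SFR.stdF, Submodule.span_le]
    rintro x ⟨hxE, hxd⟩
    refine Submodule.subset_span ⟨hkE x hxE, ?_⟩
    simp only [SetLike.mem_coe, LinearMap.mem_ker] at hxd ⊢
    rw [← hchain, hxd, map_zero]
  | n + 1 => by
    rw [SFR.stdF, SFR.stdF, Submodule.span_le]
    rintro x ⟨hxE, hxd⟩
    refine Submodule.subset_span ⟨hkE x hxE, ?_⟩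
    simp only [SetLike.mem_coe, Submodule.mem_comap, Submodule.restrictScalars_mem] at hxd ⊢
    rw [← hchain]
    exact stdF_le_comap M N f hkE hchain n hxd

end

theorem dgmorphism_preserves_standard_filtration_general (𝔸 : DGA k) (hconn : 𝔸.connected)
    (ε : 𝔸.Aug) (M N : SFR ε)
    (hMdeg : ∀ i, M.degB i = 0) (hNdeg : ∀ i, N.degB i = 0)
    (f : M.M →ₗ[k] N.M)
    (hlin : ∀ (a : 𝔸.A) (m : M.M), f (a • m) = a • f m)
    (hgr : ∀ (n : ℤ), ∀ m ∈ M.grading n, f m ∈ N.grading n)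
    (hchain : ∀ m, f (M.dM m) = N.dM (f m)) :
    ∀ (n : ℕ), ∀ m ∈ M.stdF n, f m ∈ N.stdF n := by
  let fA : M.M →ₗ[𝔸.A] N.M := { f with map_smul' := hlin }
  have hkE : ∀ x ∈ M.kE, fA x ∈ N.kE := fun x hx =>
    N.grading_zero_le_kE hconn hNdeg (hgr 0 x (M.kE_le_grading_zero hMdeg hx))
  exact fun n m hm => SFR.stdF_le_comap M N fA hkE hchain n hm

/-- Let `A` be a connected DG algebra, `M` and `N` minimal semifree
left DG `A`-modules whose semibases consist of elements of degree `0`, equipped with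
their standard semifree filtrations.  Then any morphism of DG `A`-modules `f : M → N`
preserves the standard filtrations: `f(M(n)) ⊆ N(n)` for all `n`. -/
theorem dgmorphism_preserves_standard_filtration (𝔸 : DGA k) (hconn : 𝔸.connected)
    (ε : 𝔸.Aug) (M N : SFR ε)
    (hMmin : M.toDGMod.Minimal ε) (hNmin : N.toDGMod.Minimal ε)
    (hMdeg : ∀ i, M.degB i = 0) (hNdeg : ∀ i, N.degB i = 0)
    (f : M.M →ₗ[k] N.M)
    (hlin : ∀ (a : 𝔸.A) (m : M.M), f (a • m) = a • f m)
    (hgr : ∀ (n : ℤ), ∀ m ∈ M.grading n, f m ∈ N.grading n)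
    (hchain : ∀ m, f (M.dM m) = N.dM (f m)) :
    ∀ (n : ℕ), ∀ m ∈ M.stdF n, f m ∈ N.stdF n :=
  dgmorphism_preserves_standard_filtration_general 𝔸 hconn ε M N hMdeg hNdeg f hlin hgr hchain
end

section
/- Let A be a Koszul DG algebra. Then the Ext-algebra E = Ext*_A(k,k) carries a decreasing filtration E = F_0 ⊇ F_1 ⊇ F_2 ⊇ ··· making E a filtered algebra (F_n · F_m ⊆ F_{n+m}), defined by F_n = ∏_{i≥n} V(i)* where P(n)/P(n−1) = A ⊗ V(n) for a minimal semifree resolution P of k with standard filtration; moreover E is an augmented algebra via the projection onto F_0/F_1 ≅ k. -/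
open scoped TensorProduct

variable (k : Type) [Field k]

variable {k}

/-- Powers with respect to a (Yoneda) multiplication on the Ext-space. -/
def mulPow {𝔸 : DGA k} {ε : 𝔸.Aug} (P : SFR ε)
    (mul : ↥(ExtSpace P) → ↥(ExtSpace P) → ↥(ExtSpace P)) (x : ↥(ExtSpace P)) :
    ℕ → ↥(ExtSpace P)
  | 0 => unitE P
  | n + 1 => mul x (mulPow P mul x n)

/-- The `n`-th graded piece `F_n/F_{n+1}` of the associated graded algebra of the
filtered Ext-algebra. -/
def GrPiece {𝔸 : DGA k} {ε : 𝔸.Aug} (P : SFR ε) (n : ℕ) :=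
  ↥(Fil P n) ⧸ Submodule.comap (Fil P n).subtype (Fil P (n + 1))

noncomputable instance {𝔸 : DGA k} {ε : 𝔸.Aug} (P : SFR ε) (n : ℕ) :
    AddCommGroup (GrPiece P n) := by unfold GrPiece; infer_instance

noncomputable instance {𝔸 : DGA k} {ε : 𝔸.Aug} (P : SFR ε) (n : ℕ) :
    Module k (GrPiece P n) := by unfold GrPiece; infer_instance

/-- The class of an element of `F_n` in the graded piece `F_n/F_{n+1}`. -/
noncomputable def grMk {𝔸 : DGA k} {ε : 𝔸.Aug} (P : SFR ε) (n : ℕ) (x : ↥(Fil P n)) : GrPiece P n :=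
  Submodule.Quotient.mk x

/-!
Because `A` is connected and the semibasis of `P` sits in degree `0`, `P` vanishes in negative
degrees and `P⁰` is the `k`-span of the semibasis, so a degree-`0` cocycle of `P` is determined
by its image under `εP`. Hence every `x ∈ E` lifts, by recursion on the level of the basis
elements, to an `A`-linear chain map `g_x : P → P` with `εP ∘ g_x = x`, and the lift is unique.
The Yoneda product `y · x = y ∘ g_x` inherits bilinearity, associativity and its unit from this
uniqueness. If `x` kills `P(n-1)`, then so does `g_x`, and `g_x` maps `P(n+t-1)` into `P(t-1)`;
this gives `F_n · F_m ⊆ F_{n+m}`. Since `P(0) = A·e` for a degree-`0` cocycle `e` with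
`εP e = 1`, evaluation at `e` is an augmentation with kernel `F_1`.
-/

open DirectSum

section GradedProjection

variable {ι R X Y : Type*} [DecidableEq ι] [Semiring R] [AddCommMonoid X] [Module R X]
  [AddCommMonoid Y] [Module R Y] (ℳ : ι → Submodule R X) [Decomposition ℳ]
  {𝒩 : ι → Submodule R Y} [Decomposition 𝒩]

def gradedProj (n : ι) : X →ₗ[R] X :=
  (ℳ n).subtype ∘ₗ DFinsupp.lapply n ∘ₗ (decomposeLinearEquiv ℳ).toLinearMap

variable {ℳ}

theorem gradedProj_mem (n : ι) (m : X) : gradedProj ℳ n m ∈ ℳ n :=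
  (decompose ℳ m n).2

theorem gradedProj_of_mem {i : ι} {m : X} (hm : m ∈ ℳ i) (n : ι) :
    gradedProj ℳ n m = if i = n then m else 0 := by
  split_ifs with h
  · subst h; exact decompose_of_mem_same ℳ hm
  · exact decompose_of_mem_ne ℳ hm h

theorem gradedProj_eq_self {n : ι} {m : X} (hm : m ∈ ℳ n) : gradedProj ℳ n m = m := by
  simp [gradedProj_of_mem hm]

theorem gradedProj_map_of_mapsTo (f : X →ₗ[R] Y) {φ : ι → ι} (hφ : φ.Injective)
    (hf : ∀ i, ∀ m ∈ ℳ i, f m ∈ 𝒩 (φ i)) (n : ι) (m : X) :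
    gradedProj 𝒩 (φ n) (f m) = f (gradedProj ℳ n m) := by
  induction m using Decomposition.inductionOn ℳ with
  | zero => simp
  | @homogeneous i m =>
    rw [gradedProj_of_mem (hf i m m.2), gradedProj_of_mem m.2]
    simp only [hφ.eq_iff]
    split_ifs <;> simp
  | add m m' hm hm' => simp only [map_add, hm, hm']

end GradedProjection

theorem LinearMap.isCompl_span_singleton_ker {K V : Type*} [Field K] [AddCommGroup V]
    [Module K V] (f : V →ₗ[K] K) {v : V} (hv : f v ≠ 0) : IsCompl (K ∙ v) (ker f) := by
  refine ⟨Submodule.disjoint_def.2 fun w hw hwf => ?_,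
    codisjoint_iff.2 (f.span_singleton_sup_ker_eq_top hv)⟩
  obtain ⟨c, rfl⟩ := Submodule.mem_span_singleton.1 hw
  rw [mem_ker, map_smul, smul_eq_mul, mul_eq_zero] at hwf
  simp [hwf.resolve_right hv]

section ExtAlgebra

variable {𝔸 : DGA k} {ε : 𝔸.Aug}

theorem DGA.connected.gradedProj_neg (hconn : 𝔸.connected) {n : ℤ} (hn : n < 0) (a : 𝔸.A) :
    gradedProj 𝔸.grading n a = 0 := by
  simpa [hconn.1 n hn] using gradedProj_mem (ℳ := 𝔸.grading) n a

theorem DGA.connected.exists_gradedProj_zero_eq (hconn : 𝔸.connected) (a : 𝔸.A) :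
    ∃ c : k, gradedProj 𝔸.grading 0 a = c • 1 := by
  have h := gradedProj_mem (ℳ := 𝔸.grading) 0 a
  rw [hconn.2, Submodule.mem_span_singleton] at h
  exact h.imp fun _ => Eq.symm

def DGMod.chainLocus (Q : DGMod 𝔸) (G : Q.M →ₗ[𝔸.A] Q.M) : Submodule 𝔸.A Q.M where
  carrier := {m | Q.dM (G m) = G (Q.dM m)}
  add_mem' {m m'} (hm : Q.dM (G m) = G (Q.dM m)) (hm' : Q.dM (G m') = G (Q.dM m')) := by
    change Q.dM (G (m + m')) = G (Q.dM (m + m'))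
    simp only [map_add, hm, hm']
  zero_mem' := by simp
  smul_mem' a m (hm : Q.dM (G m) = G (Q.dM m)) := by
    change Q.dM (G (a • m)) = G (Q.dM (a • m))
    induction a using Decomposition.inductionOn 𝔸.grading with
    | zero => simp
    | @homogeneous i a => simp only [map_smul, Q.leibniz i a _ a.2, map_add, map_zsmul, hm]
    | add a a' ha ha' => simp only [add_smul, map_add, ha, ha']

theorem DGMod.mem_chainLocus {Q : DGMod 𝔸} {G : Q.M →ₗ[𝔸.A] Q.M} {m : Q.M} :
    m ∈ Q.chainLocus G ↔ Q.dM (G m) = G (Q.dM m) :=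
  Iff.rfl

theorem mem_extSpace_iff {P : SFR ε} {f : P.M →ₗ[k] k} :
    f ∈ ExtSpace P ↔ (∀ (a : 𝔸.A) (m : P.M), f (a • m) = ε.ε a * f m) ∧
      (∀ n : ℤ, n ≠ 0 → ∀ m ∈ P.grading n, f m = 0) ∧ ∀ m, f (P.dM m) = 0 := by
  unfold ExtSpace; rfl

namespace SFR

variable (P : SFR ε)

theorem bas_mem_grading_zero (hdeg : ∀ i, P.degB i = 0) (j : P.ι) : P.bas j ∈ P.grading 0 :=
  hdeg j ▸ P.homog j

theorem smul_mem_grading {n : ℤ} {a : 𝔸.A} {m : P.M} (ha : a ∈ 𝔸.grading n)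
    (hm : m ∈ P.grading 0) : a • m ∈ P.grading n :=
  add_zero n ▸ P.smul_mem n 0 a m ha hm

theorem gradedProj_smul_bas (hdeg : ∀ i, P.degB i = 0) (n : ℤ) (a : 𝔸.A) (j : P.ι) :
    gradedProj P.grading n (a • P.bas j) = gradedProj 𝔸.grading n a • P.bas j :=
  gradedProj_map_of_mapsTo (ℳ := 𝔸.grading) (φ := id)
    ((LinearMap.toSpanSingleton 𝔸.A P.M (P.bas j)).restrictScalars k) Function.injective_id
    (fun _ _ ha => P.smul_mem_grading ha (P.bas_mem_grading_zero hdeg j)) n a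

theorem gradedProj_eq_sum (hdeg : ∀ i, P.degB i = 0) (n : ℤ) (m : P.M) :
    gradedProj P.grading n m =
      (P.bas.repr m).sum fun j a => gradedProj 𝔸.grading n a • P.bas j := by
  conv_lhs => rw [← P.bas.linearCombination_repr m, Finsupp.linearCombination_apply]
  simp only [map_finsuppSum, P.gradedProj_smul_bas hdeg]

theorem eq_zero_of_mem_grading_neg (hconn : 𝔸.connected) (hdeg : ∀ i, P.degB i = 0) {n : ℤ}
    (hn : n < 0) {m : P.M} (hm : m ∈ P.grading n) : m = 0 := by
  rw [← gradedProj_eq_self hm, P.gradedProj_eq_sum hdeg]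
  simp [hconn.gradedProj_neg hn]

theorem grading_zero_eq_kE (hconn : 𝔸.connected) (hdeg : ∀ i, P.degB i = 0) :
    P.grading 0 = P.kE := by
  refine le_antisymm (fun m hm => ?_) (Submodule.span_le.2 ?_)
  · rw [← gradedProj_eq_self hm, P.gradedProj_eq_sum hdeg]
    refine Submodule.finsuppSum_mem _ _ _ _ fun j _ => ?_
    obtain ⟨c, hc⟩ := hconn.exists_gradedProj_zero_eq (P.bas.repr m j)
    rw [hc, smul_assoc, one_smul]
    exact Submodule.smul_mem _ c (Submodule.subset_span ⟨j, rfl⟩)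
  · rintro _ ⟨j, rfl⟩
    exact P.bas_mem_grading_zero hdeg j

theorem gradedProj_dM (n : ℤ) (m : P.M) :
    gradedProj P.grading (n + 1) (P.dM m) = P.dM (gradedProj P.grading n m) :=
  gradedProj_map_of_mapsTo (φ := (· + 1)) P.dM (add_left_injective 1) P.dM_deg n m

theorem exists_dM_eq_of_mem_grading {n : ℤ} {m : P.M} (hm : m ∈ P.grading n)
    (hd : P.dM m = 0) (hε : P.εP m = 0) : ∃ y ∈ P.grading (n - 1), P.dM y = m := by
  obtain ⟨y, rfl⟩ := P.qis_ker n m hm hd hε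
  refine ⟨gradedProj P.grading (n - 1) y, gradedProj_mem _ _, ?_⟩
  rw [← gradedProj_dM, sub_add_cancel, gradedProj_eq_self hm]

theorem eq_zero_of_cocycle (hconn : 𝔸.connected) (hdeg : ∀ i, P.degB i = 0) {m : P.M}
    (hm : m ∈ P.grading 0) (hd : P.dM m = 0) (hε : P.εP m = 0) : m = 0 := by
  obtain ⟨y, hy, rfl⟩ := P.exists_dM_eq_of_mem_grading hm hd hε
  rw [P.eq_zero_of_mem_grading_neg hconn hdeg (by norm_num) hy, map_zero]

noncomputable def unitCocycle : P.M := P.qis_surj.choose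

theorem unitCocycle_mem : P.unitCocycle ∈ P.grading 0 := P.qis_surj.choose_spec.1

@[simp] theorem dM_unitCocycle : P.dM P.unitCocycle = 0 := P.qis_surj.choose_spec.2.1

@[simp] theorem εP_unitCocycle : P.εP P.unitCocycle = 1 := P.qis_surj.choose_spec.2.2

theorem eq_smul_unitCocycle (hconn : 𝔸.connected) (hdeg : ∀ i, P.degB i = 0) {m : P.M}
    (hm : m ∈ P.grading 0) (hd : P.dM m = 0) : m = P.εP m • P.unitCocycle := by
  refine sub_eq_zero.1 (P.eq_zero_of_cocycle hconn hdeg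
    (Submodule.sub_mem _ hm (Submodule.smul_mem _ _ P.unitCocycle_mem)) ?_ ?_) <;> simp [hd]

theorem induction_lvl {p : P.ι → Prop} (h : ∀ i, (∀ j, P.lvl j < P.lvl i → p j) → p i)
    (i : P.ι) : p i :=
  (measure P.lvl).wf.induction i h

theorem dM_bas_mem {S : Submodule 𝔸.A P.M} {i : P.ι}
    (h : ∀ j, P.lvl j < P.lvl i → P.bas j ∈ S) : P.dM (P.bas i) ∈ S :=
  Submodule.span_le.2 (by rintro _ ⟨j, hj, rfl⟩; exact h j hj) (P.d_lvl i)

theorem lvl_lt_of_mem_support {i j : P.ι} (hj : j ∈ (P.bas.repr (P.dM (P.bas i))).support) :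
    P.lvl j < P.lvl i :=
  (Module.Basis.mem_span_image P.bas).1 (P.d_lvl i) hj

theorem constr_mem_grading (hdeg : ∀ i, P.degB i = 0) {f : P.ι → P.M} {n : ℤ} {m : P.M}
    (hm : m ∈ P.grading n) (hf : ∀ j ∈ (P.bas.repr m).support, f j ∈ P.grading 0) :
    P.bas.constr k f m ∈ P.grading n := by
  rw [← gradedProj_eq_self hm, P.gradedProj_eq_sum hdeg, map_finsuppSum]
  refine Submodule.finsuppSum_mem _ _ _ _ fun j hj => ?_
  rw [map_smul, Module.Basis.constr_basis]
  exact P.smul_mem_grading (gradedProj_mem n _) (hf j (Finsupp.mem_support_iff.2 hj))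

theorem ext_of_semilinear {f f' : P.M →ₗ[k] k} (hf : ∀ (a : 𝔸.A) m, f (a • m) = ε.ε a * f m)
    (hf' : ∀ (a : 𝔸.A) m, f' (a • m) = ε.ε a * f' m) (h : ∀ j, f (P.bas j) = f' (P.bas j)) :
    f = f' := by
  ext m
  have hm : m ∈ Submodule.span 𝔸.A (Set.range P.bas) := P.bas.span_eq ▸ Submodule.mem_top
  induction hm using Submodule.span_induction with
  | mem _ hz => obtain ⟨j, rfl⟩ := hz; exact h j
  | zero => simp
  | add _ _ _ _ hu hv => simp [hu, hv]
  | smul a _ _ hu => rw [hf, hf', hu]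

/-- By `liftBasisVal_spec` the existential always holds, so the junk value `0` never occurs. -/
noncomputable def liftBasisVal (x : P.M →ₗ[k] k) : P.ι → P.M :=
  open Classical in
  (measure P.lvl).wf.fix fun i lower =>
    let w := P.bas.constr k (fun j => if h : P.lvl j < P.lvl i then lower j h else 0)
      (P.dM (P.bas i))
    if h : ∃ u ∈ P.grading 0, P.dM u = w ∧ P.εP u = x (P.bas i) then h.choose else 0

noncomputable def liftMap (x : P.M →ₗ[k] k) : P.M →ₗ[𝔸.A] P.M :=
  P.bas.constr k (P.liftBasisVal x)

open Classical in
theorem liftBasisVal_eq (x : P.M →ₗ[k] k) (i : P.ι) :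
    P.liftBasisVal x i =
      if h : ∃ u ∈ P.grading 0, P.dM u = P.liftMap x (P.dM (P.bas i)) ∧
          P.εP u = x (P.bas i) then h.choose else 0 := by
  have hw : P.bas.constr k (fun j => if P.lvl j < P.lvl i then P.liftBasisVal x j else 0)
      (P.dM (P.bas i)) = P.liftMap x (P.dM (P.bas i)) := by
    rw [liftMap, Module.Basis.constr_apply, Module.Basis.constr_apply]
    exact Finsupp.sum_congr fun j hj => by rw [if_pos (P.lvl_lt_of_mem_support hj)]
  conv_lhs => rw [liftBasisVal, WellFounded.fix_eq]
  simp only [dite_eq_ite]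
  rw [← liftBasisVal]
  simp only [hw]

theorem liftBasisVal_spec (hdeg : ∀ i, P.degB i = 0) (x : P.M →ₗ[k] k) (i : P.ι) :
    P.liftBasisVal x i ∈ P.grading 0 ∧
      P.dM (P.liftBasisVal x i) = P.liftMap x (P.dM (P.bas i)) ∧
      P.εP (P.liftBasisVal x i) = x (P.bas i) := by
  induction i using P.induction_lvl with
  | h i ih =>
    set w := P.liftMap x (P.dM (P.bas i))
    have hw : w ∈ P.grading 1 :=
      P.constr_mem_grading hdeg (zero_add (1 : ℤ) ▸ P.dM_deg 0 _ (P.bas_mem_grading_zero hdeg i))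
        fun j hj => (ih j (P.lvl_lt_of_mem_support hj)).1
    have hwd : P.dM w = 0 := by
      have : P.dM (P.bas i) ∈ P.chainLocus (P.liftMap x) := P.dM_bas_mem fun j hj => by
        rw [DGMod.mem_chainLocus, liftMap, Module.Basis.constr_basis]
        exact (ih j hj).2.1
      exact this.trans (by rw [P.dM_sq, map_zero])
    obtain ⟨u, hu, hud⟩ := P.exists_dM_eq_of_mem_grading hw hwd (P.εP_deg 1 one_ne_zero w hw)
    rw [sub_self] at hu
    have hex : ∃ u ∈ P.grading 0, P.dM u = w ∧ P.εP u = x (P.bas i) :=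
      ⟨u + (x (P.bas i) - P.εP u) • P.unitCocycle,
        Submodule.add_mem _ hu (Submodule.smul_mem _ _ P.unitCocycle_mem), by simp [hud],
        by simp⟩
    rw [liftBasisVal_eq, dif_pos hex]
    exact hex.choose_spec

theorem isLift_liftMap (hdeg : ∀ i, P.degB i = 0) (x : ↥(ExtSpace P)) :
    IsLift P ((P.liftMap x).restrictScalars k) x := by
  have hval := P.liftBasisVal_spec hdeg x
  have hchain : P.chainLocus (P.liftMap x) = ⊤ := by
    rw [eq_top_iff, ← P.bas.span_eq, Submodule.span_le]
    rintro _ ⟨j, rfl⟩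
    rw [SetLike.mem_coe, DGMod.mem_chainLocus, liftMap, Module.Basis.constr_basis]
    exact (hval j).2.1
  refine ⟨fun a m => (P.liftMap x).map_smul a m, fun n m hm => P.constr_mem_grading hdeg hm
    fun j _ => (hval j).1, fun m => ?_, fun m => ?_⟩
  · exact (DGMod.mem_chainLocus.1 (hchain ▸ Submodule.mem_top : m ∈ _)).symm
  · refine LinearMap.congr_fun (P.ext_of_semilinear
      (f' := P.εP ∘ₗ (P.liftMap x).restrictScalars k)
      (mem_extSpace_iff.1 x.2).1 (fun a m => by simp [P.εP_lin]) fun j => ?_) m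
    simp [liftMap, (hval j).2.2]

def extKer (x : ↥(ExtSpace P)) : Submodule 𝔸.A P.M where
  carrier := {m | (x : P.M →ₗ[k] k) m = 0}
  add_mem' {m m'} (hm : (x : P.M →ₗ[k] k) m = 0) (hm' : (x : P.M →ₗ[k] k) m' = 0) := by
    change (x : P.M →ₗ[k] k) (m + m') = 0
    rw [map_add, hm, hm', add_zero]
  zero_mem' := map_zero _
  smul_mem' a m (hm : (x : P.M →ₗ[k] k) m = 0) := by
    change (x : P.M →ₗ[k] k) (a • m) = 0
    rw [(mem_extSpace_iff.1 x.2).1, hm, mul_zero]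

theorem mem_extKer {x : ↥(ExtSpace P)} {m : P.M} :
    m ∈ P.extKer x ↔ (x : P.M →ₗ[k] k) m = 0 :=
  Iff.rfl

def filtStep (U : Submodule 𝔸.A P.M) : Submodule 𝔸.A P.M :=
  Submodule.span 𝔸.A (P.kE ⊓ (U.restrictScalars k).comap P.dM : Submodule k P.M)

theorem filtStep_mono {U V : Submodule 𝔸.A P.M} (h : U ≤ V) : P.filtStep U ≤ P.filtStep V :=
  Submodule.span_mono (inf_le_inf_left _ (Submodule.comap_mono h))

/-- `P.filt n` is the step `P(n - 1)` of the standard filtration, with `P(-1) = 0`, so that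
`Fil P n` is the annihilator of `P.filt n` for every `n`. -/
def filt : ℕ → Submodule 𝔸.A P.M
  | 0 => ⊥
  | n + 1 => P.stdF n

theorem filt_succ (n : ℕ) : P.filt (n + 1) = P.filtStep (P.filt n) := by
  cases n with
  | zero => simp [filt, filtStep, stdF, Submodule.comap_bot]
  | succ n => rfl

theorem filt_mono : Monotone P.filt := by
  refine monotone_nat_of_le_succ fun n => ?_
  induction n with
  | zero => exact bot_le
  | succ n ih => rw [P.filt_succ, P.filt_succ (n + 1)]; exact P.filtStep_mono ih

theorem mem_fil_iff {n : ℕ} {x : ↥(ExtSpace P)} : x ∈ Fil P n ↔ P.filt n ≤ P.extKer x := by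
  cases n with
  | zero => simp [Fil, filt]
  | succ n =>
    simp only [Fil, Submodule.mem_iInf, LinearMap.mem_ker, LinearMap.comp_apply,
      Submodule.coe_subtype, LinearMap.applyₗ_apply_apply]
    rfl

end SFR

theorem isLift_id (P : SFR ε) : IsLift P LinearMap.id (unitE P) :=
  ⟨fun _ _ => rfl, fun _ _ hm => hm, fun _ => rfl, fun _ => rfl⟩

namespace IsLift

variable {P : SFR ε} {g g' : P.M →ₗ[k] P.M} {x y : ↥(ExtSpace P)}

def toLinearMap (hg : IsLift P g x) : P.M →ₗ[𝔸.A] P.M where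
  toFun := g
  map_add' := g.map_add
  map_smul' := hg.1

@[simp] theorem toLinearMap_apply (hg : IsLift P g x) (m : P.M) : hg.toLinearMap m = g m := rfl

theorem add (hg : IsLift P g x) (hg' : IsLift P g' y) : IsLift P (g + g') (x + y) :=
  ⟨fun a m => by simp [hg.1, hg'.1], fun n m hm => add_mem (hg.2.1 n m hm) (hg'.2.1 n m hm),
    fun m => by simp [hg.2.2.1, hg'.2.2.1], fun m => by simp [hg.2.2.2, hg'.2.2.2]⟩

theorem sub (hg : IsLift P g x) (hg' : IsLift P g' y) : IsLift P (g - g') (x - y) :=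
  ⟨fun a m => by simp [hg.1, hg'.1, smul_sub],
    fun n m hm => sub_mem (hg.2.1 n m hm) (hg'.2.1 n m hm),
    fun m => by simp [hg.2.2.1, hg'.2.2.1], fun m => by simp [hg.2.2.2, hg'.2.2.2]⟩

theorem smul (hg : IsLift P g x) (c : k) : IsLift P (c • g) (c • x) :=
  ⟨fun a m => by simp [hg.1, smul_comm c a], fun n m hm => Submodule.smul_mem _ c (hg.2.1 n m hm),
    fun m => by simp [hg.2.2.1], fun m => by simp [hg.2.2.2]⟩

theorem comp (hg : IsLift P g y) (hg' : IsLift P g' x) {z : ↥(ExtSpace P)}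
    (hz : ∀ m, (z : P.M →ₗ[k] k) m = (y : P.M →ₗ[k] k) (g' m)) : IsLift P (g ∘ₗ g') z :=
  ⟨fun a m => by simp [hg.1, hg'.1], fun n m hm => hg.2.1 n _ (hg'.2.1 n m hm),
    fun m => by simp [hg.2.2.1, hg'.2.2.1], fun m => by simp [hz, hg.2.2.2]⟩

theorem comp_mem (hg : IsLift P g x) {f : P.M →ₗ[k] k} (hf : f ∈ ExtSpace P) :
    f ∘ₗ g ∈ ExtSpace P := by
  obtain ⟨hf₁, hf₂, hf₃⟩ := mem_extSpace_iff.1 hf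
  exact mem_extSpace_iff.2 ⟨fun a m => by simp [hg.1, hf₁], fun n hn m hm =>
    hf₂ n hn _ (hg.2.1 n m hm), fun m => by simp [hg.2.2.1, hf₃]⟩

theorem eq_zero (hconn : 𝔸.connected) (hdeg : ∀ i, P.degB i = 0) (hg : IsLift P g 0) :
    g = 0 := by
  have hbas : ∀ i, hg.toLinearMap (P.bas i) = 0 := by
    refine P.induction_lvl fun i ih => ?_
    refine P.eq_zero_of_cocycle hconn hdeg (hg.2.1 0 _ (P.bas_mem_grading_zero hdeg i)) ?_
      (hg.2.2.2 _).symm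
    rw [toLinearMap_apply, ← hg.2.2.1]
    exact P.dM_bas_mem (S := LinearMap.ker hg.toLinearMap) ih
  ext m
  exact LinearMap.congr_fun (P.bas.ext (f₂ := 0) hbas) m

theorem unique (hconn : 𝔸.connected) (hdeg : ∀ i, P.degB i = 0) (hg : IsLift P g x)
    (hg' : IsLift P g' x) : g = g' :=
  sub_eq_zero.1 <| eq_zero hconn hdeg (sub_self x ▸ hg.sub hg')

theorem apply_unitCocycle (hconn : 𝔸.connected) (hdeg : ∀ i, P.degB i = 0)
    (hg : IsLift P g x) : g P.unitCocycle = (x : P.M →ₗ[k] k) P.unitCocycle • P.unitCocycle := by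
  rw [P.eq_smul_unitCocycle hconn hdeg (hg.2.1 0 _ P.unitCocycle_mem) (by simp [← hg.2.2.1]),
    hg.2.2.2]

theorem filtStep_le_comap (hconn : 𝔸.connected) (hdeg : ∀ i, P.degB i = 0)
    (hg : IsLift P g x) {U V : Submodule 𝔸.A P.M} (hUV : U ≤ V.comap hg.toLinearMap) :
    P.filtStep U ≤ (P.filtStep V).comap hg.toLinearMap := by
  refine Submodule.span_le.2 fun z ⟨hzk, hzd⟩ => Submodule.subset_span ⟨?_, ?_⟩
  · rw [← P.grading_zero_eq_kE hconn hdeg] at hzk ⊢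
    exact hg.2.1 0 z hzk
  · change P.dM (g z) ∈ V
    rw [← hg.2.2.1]
    exact hUV hzd

theorem filt_le_ker (hconn : 𝔸.connected) (hdeg : ∀ i, P.degB i = 0) (hg : IsLift P g x)
    {n : ℕ} (hx : x ∈ Fil P n) : P.filt n ≤ LinearMap.ker hg.toLinearMap := by
  rw [P.mem_fil_iff] at hx
  induction n with
  | zero => exact bot_le
  | succ n ih =>
    rw [P.filt_succ] at hx ⊢
    refine Submodule.span_le.2 fun z ⟨hzk, hzd⟩ => ?_
    refine P.eq_zero_of_cocycle hconn hdeg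
      (hg.2.1 0 z (P.grading_zero_eq_kE hconn hdeg ▸ hzk)) ?_ ?_
    · rw [toLinearMap_apply, ← hg.2.2.1]
      exact ih ((P.filt_mono n.le_succ).trans (P.filt_succ n ▸ hx)) hzd
    · rw [toLinearMap_apply, ← hg.2.2.2]
      exact hx (Submodule.subset_span ⟨hzk, hzd⟩)

theorem filt_add_le_comap (hconn : 𝔸.connected) (hdeg : ∀ i, P.degB i = 0)
    (hg : IsLift P g x) {n : ℕ} (hx : x ∈ Fil P n) (t : ℕ) :
    P.filt (n + t) ≤ (P.filt t).comap hg.toLinearMap := by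
  induction t with
  | zero => simpa [SFR.filt, Submodule.comap_bot] using hg.filt_le_ker hconn hdeg hx
  | succ t ih =>
    rw [← add_assoc, P.filt_succ, P.filt_succ]
    exact hg.filtStep_le_comap hconn hdeg ih

end IsLift

noncomputable def yonedaMul (P : SFR ε) (hdeg : ∀ i, P.degB i = 0) (y x : ↥(ExtSpace P)) :
    ↥(ExtSpace P) :=
  ⟨(y : P.M →ₗ[k] k) ∘ₗ (P.liftMap x).restrictScalars k, (P.isLift_liftMap hdeg x).comp_mem y.2⟩

theorem yonedaMul_apply (P : SFR ε) (hdeg : ∀ i, P.degB i = 0) (y x : ↥(ExtSpace P)) (m : P.M) :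
    (yonedaMul P hdeg y x : P.M →ₗ[k] k) m = (y : P.M →ₗ[k] k) (P.liftMap x m) :=
  rfl

theorem IsLift.yonedaMul_apply {P : SFR ε} (hconn : 𝔸.connected) (hdeg : ∀ i, P.degB i = 0)
    {g : P.M →ₗ[k] P.M} {x : ↥(ExtSpace P)} (hg : IsLift P g x) (y : ↥(ExtSpace P)) (m : P.M) :
    (yonedaMul P hdeg y x : P.M →ₗ[k] k) m = (y : P.M →ₗ[k] k) (g m) := by
  rw [_root_.yonedaMul_apply, ← (P.isLift_liftMap hdeg x).unique hconn hdeg hg]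
  rfl

theorem extMulOk_yonedaMul {P : SFR ε} (hconn : 𝔸.connected) (hdeg : ∀ i, P.degB i = 0) :
    ExtMulOk P (yonedaMul P hdeg) := by
  have hlift := P.isLift_liftMap hdeg
  refine ⟨fun y x g hg => hg.yonedaMul_apply hconn hdeg y, fun _ _ _ => rfl, fun y x₁ x₂ => ?_,
    fun _ _ _ => rfl, fun c y x => ?_, fun z y x => ?_, fun x => ?_, fun x => ?_⟩
  · ext m
    simp [((hlift x₁).add (hlift x₂)).yonedaMul_apply hconn hdeg, yonedaMul_apply]
  · ext m
    simp [((hlift x).smul c).yonedaMul_apply hconn hdeg, yonedaMul_apply]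
  · ext m
    exact (((hlift y).comp (hlift x) fun _ => rfl).yonedaMul_apply hconn hdeg z m).symm
  · ext m
    exact ((hlift x).2.2.2 m).symm
  · ext m
    exact (isLift_id P).yonedaMul_apply hconn hdeg x m

theorem fil_succ_le {P : SFR ε} (n : ℕ) : Fil P (n + 1) ≤ Fil P n := fun _ hx =>
  P.mem_fil_iff.2 ((P.filt_mono n.le_succ).trans (P.mem_fil_iff.1 hx))

theorem yonedaMul_mem_fil {P : SFR ε} (hconn : 𝔸.connected) (hdeg : ∀ i, P.degB i = 0)
    {n m : ℕ} {x y : ↥(ExtSpace P)} (hx : x ∈ Fil P n) (hy : y ∈ Fil P m) :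
    yonedaMul P hdeg y x ∈ Fil P (n + m) := by
  rw [P.mem_fil_iff] at hy ⊢
  exact ((P.isLift_liftMap hdeg x).filt_add_le_comap hconn hdeg hx m).trans
    (Submodule.comap_mono hy)

noncomputable def augE (P : SFR ε) : ↥(ExtSpace P) →ₗ[k] k :=
  LinearMap.applyₗ P.unitCocycle ∘ₗ (ExtSpace P).subtype

theorem augE_apply (P : SFR ε) (x : ↥(ExtSpace P)) :
    augE P x = (x : P.M →ₗ[k] k) P.unitCocycle :=
  rfl

theorem augE_unitE (P : SFR ε) : augE P (unitE P) = 1 := P.εP_unitCocycle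

theorem ker_augE {P : SFR ε} (hconn : 𝔸.connected) (hdeg : ∀ i, P.degB i = 0) :
    LinearMap.ker (augE P) = Fil P 1 := by
  ext x
  rw [LinearMap.mem_ker, augE_apply, P.mem_fil_iff, SFR.filt_succ]
  refine ⟨fun hx => Submodule.span_le.2 fun z ⟨hzk, hzd⟩ => ?_, fun hx => hx ?_⟩
  · have hz0 : z ∈ P.grading 0 := (P.grading_zero_eq_kE hconn hdeg).symm ▸ hzk
    have hzd' : P.dM z = 0 := by simpa [SFR.filt] using hzd
    rw [SetLike.mem_coe, SFR.mem_extKer, P.eq_smul_unitCocycle hconn hdeg hz0 hzd', map_smul, hx,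
      smul_zero]
  · refine Submodule.subset_span ⟨P.grading_zero_eq_kE hconn hdeg ▸ P.unitCocycle_mem, ?_⟩
    simp [SFR.filt]

theorem augE_yonedaMul {P : SFR ε} (hconn : 𝔸.connected) (hdeg : ∀ i, P.degB i = 0)
    (y x : ↥(ExtSpace P)) : augE P (yonedaMul P hdeg y x) = augE P y * augE P x := by
  have hx := (P.isLift_liftMap hdeg x).apply_unitCocycle hconn hdeg
  rw [LinearMap.restrictScalars_apply] at hx
  rw [augE_apply, yonedaMul_apply, hx, map_smul, smul_eq_mul, mul_comm]
  rfl

end ExtAlgebra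

theorem ext_algebra_filtered_augmented_general (𝔸 : DGA k) (hconn : 𝔸.connected) (ε : 𝔸.Aug)
    (P : SFR ε) (hdeg : ∀ i, P.degB i = 0) :
    ∃ mul : ↥(ExtSpace P) → ↥(ExtSpace P) → ↥(ExtSpace P),
      ExtMulOk P mul ∧
      -- the filtration is decreasing
      (∀ n : ℕ, Fil P (n + 1) ≤ Fil P n) ∧
      -- `E` is a filtered algebra: `F_m · F_n ⊆ F_{n+m}`
      (∀ (n m : ℕ) (x y : ↥(ExtSpace P)), x ∈ Fil P n → y ∈ Fil P m →
        mul y x ∈ Fil P (n + m)) ∧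
      -- `E` is augmented, via the projection onto `F_0/F_1 ≅ k`
      (∃ εE : ↥(ExtSpace P) →ₗ[k] k,
        εE (unitE P) = 1 ∧
        LinearMap.ker εE = Fil P 1 ∧
        (∀ y x, εE (mul y x) = εE y * εE x)) ∧
      IsCompl (Submodule.span k {unitE P}) (Fil P 1) := by
  refine ⟨yonedaMul P hdeg, extMulOk_yonedaMul hconn hdeg, fil_succ_le,
    fun n m x y hx hy => yonedaMul_mem_fil hconn hdeg hx hy,
    ⟨augE P, augE_unitE P, ker_augE hconn hdeg, augE_yonedaMul hconn hdeg⟩, ?_⟩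
  rw [← ker_augE hconn hdeg]
  exact (augE P).isCompl_span_singleton_ker (by simp [augE_unitE])

/-- Let `A` be a Koszul DG algebra.  Then the Ext-algebra
`E = Ext*_A(k,k) = Ext⁰_A(k,k)` (realized on a minimal semifree resolution `P` of `k`
with semibasis in degree `0`) carries the Yoneda product `mul`, making it an associative
unital `k`-algebra; the decreasing filtration `F_n = {x | x` kills `P(n-1)}`
(`= ∏_{i ≥ n} V(i)^*`) makes `E` a filtered algebra (`F_n · F_m ⊆ F_{n+m}`); and `E` is
augmented via the projection onto `F_0/F_1 ≅ k`. -/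
theorem ext_algebra_filtered_augmented (𝔸 : DGA k) (hconn : 𝔸.connected) (ε : 𝔸.Aug)
    (hKoszul : ExtVanish 𝔸 ε) (P : SFR ε) (hmin : P.toDGMod.Minimal ε)
    (hdeg : ∀ i, P.degB i = 0) :
    ∃ mul : ↥(ExtSpace P) → ↥(ExtSpace P) → ↥(ExtSpace P),
      ExtMulOk P mul ∧
      -- the filtration is decreasing
      (∀ n : ℕ, Fil P (n + 1) ≤ Fil P n) ∧
      -- `E` is a filtered algebra: `F_m · F_n ⊆ F_{n+m}`
      (∀ (n m : ℕ) (x y : ↥(ExtSpace P)), x ∈ Fil P n → y ∈ Fil P m →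
        mul y x ∈ Fil P (n + m)) ∧
      -- `E` is augmented, via the projection onto `F_0/F_1 ≅ k`
      (∃ εE : ↥(ExtSpace P) →ₗ[k] k,
        εE (unitE P) = 1 ∧
        LinearMap.ker εE = Fil P 1 ∧
        (∀ y x, εE (mul y x) = εE y * εE x)) ∧
      IsCompl (Submodule.span k {unitE P}) (Fil P 1) :=
  ext_algebra_filtered_augmented_general 𝔸 hconn ε P hdeg
end

section
/- Let A be a connected DG algebra right AS-Gorenstein with RHom_{A^op}(k,A) ≅ s^l k, and let P → k_A be a minimal semifree resolution of the trivial right module with finite semifree filtration 0 ⊆ P(0) ⊆ ··· ⊆ P(n) = P, P(n)/P(n−1) ≠ 0. Then the top subquotient satisfies P(n)/P(n−1) ≅ A[−l] (a single free module on one generator of degree −l). -/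
open scoped TensorProduct

variable (k : Type) [Field k]

variable {k}

open MulOpposite in
/-- A semifree resolution of the trivial *right* DG module `k` over an augmented DG
algebra `𝔸`: a right DG `𝔸`-module (i.e. a module over `𝔸.Aᵐᵒᵖ`), semifree with a
chosen semibasis, together with a quasi-isomorphism `εP` onto `k`. -/
structure RSFR {𝔸 : DGA k} (ε : 𝔸.Aug) where
  M : Type
  [acg : AddCommGroup M]
  [amod : Module 𝔸.Aᵐᵒᵖ M]
  [kmod : Module k M]
  [tower : IsScalarTower k 𝔸.Aᵐᵒᵖ M]
  grading : ℤ → Submodule k M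
  [decomp : DirectSum.Decomposition grading]
  smul_mem : ∀ (i j : ℤ) (a : 𝔸.A) (m : M), a ∈ 𝔸.grading i → m ∈ grading j →
      op a • m ∈ grading (j + i)
  dM : M →ₗ[k] M
  dM_deg : ∀ (n : ℤ) (m : M), m ∈ grading n → dM m ∈ grading (n + 1)
  dM_sq : ∀ m : M, dM (dM m) = 0
  leibniz : ∀ (i j : ℤ) (a : 𝔸.A) (m : M), a ∈ 𝔸.grading i → m ∈ grading j →
      dM (op a • m) = op a • dM m + (Int.negOnePow j : ℤ) • (op (𝔸.d a) • m)
  ι : Type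
  bas : Module.Basis ι 𝔸.Aᵐᵒᵖ M
  degB : ι → ℤ
  homog : ∀ i, bas i ∈ grading (degB i)
  lvl : ι → ℕ
  d_lvl : ∀ i, dM (bas i) ∈ Submodule.span 𝔸.Aᵐᵒᵖ (bas '' {j | lvl j < lvl i})
  εP : M →ₗ[k] k
  εP_lin : ∀ (a : 𝔸.A) (m : M), εP (op a • m) = ε.ε a * εP m
  εP_deg : ∀ n : ℤ, n ≠ 0 → ∀ m ∈ grading n, εP m = 0
  εP_d : ∀ m, εP (dM m) = 0
  qis_surj : ∃ m ∈ grading 0, dM m = 0 ∧ εP m = 1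
  qis_ker : ∀ (n : ℤ) (m : M), m ∈ grading n → dM m = 0 → εP m = 0 →
      m ∈ LinearMap.range dM

attribute [instance] RSFR.acg RSFR.amod RSFR.kmod RSFR.tower RSFR.decomp

open MulOpposite in
/-- Minimality of a right semifree resolution: `d(P) ⊆ P·I(A)`. -/
def RSFR.RMinimal {𝔸 : DGA k} {ε : 𝔸.Aug} (P : RSFR ε) : Prop :=
  ∀ m : P.M, P.dM m ∈ Submodule.span 𝔸.Aᵐᵒᵖ
    {x : P.M | ∃ (a : 𝔸.A) (m' : P.M), ε.ε a = 0 ∧ x = op a • m'}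

open MulOpposite in
/-- A degree `n` cocycle of the complex `Hom_{A^op}(P, A)` (which computes
`RHom_{A^op}(k, A)`). -/
def RIsCocycleA {𝔸 : DGA k} {ε : 𝔸.Aug} (P : RSFR ε) (n : ℤ)
    (f : P.M →ₗ[k] 𝔸.A) : Prop :=
  (∀ (a : 𝔸.A) (m : P.M), f (op a • m) = f m * a) ∧
  (∀ (i : ℤ), ∀ m ∈ P.grading i, f m ∈ 𝔸.grading (i + n)) ∧
  (∀ m, 𝔸.d (f m) = (Int.negOnePow n : ℤ) • f (P.dM m))

open MulOpposite in
/-- A degree `n` coboundary of the complex `Hom_{A^op}(P, A)`. -/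
def RIsCoboundaryA {𝔸 : DGA k} {ε : 𝔸.Aug} (P : RSFR ε) (n : ℤ)
    (f : P.M →ₗ[k] 𝔸.A) : Prop :=
  ∃ g : P.M →ₗ[k] 𝔸.A,
    (∀ (a : 𝔸.A) (m : P.M), g (op a • m) = g m * a) ∧
    (∀ (i : ℤ), ∀ m ∈ P.grading i, g m ∈ 𝔸.grading (i + (n - 1))) ∧
    ∀ m, f m = 𝔸.d (g m) + (Int.negOnePow (n - 1) : ℤ) • g (P.dM m)

/-- `RHom_{A^op}(k, A) ≅ s^l k`: the cohomology of `Hom_{A^op}(P,A)` vanishes in degrees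
`≠ l` and is one-dimensional in degree `l`, for every semifree resolution `P` of the
trivial right DG module `k`. -/
def RightGorAt {𝔸 : DGA k} (ε : 𝔸.Aug) (l : ℤ) : Prop :=
  ∀ P : RSFR ε,
    (∀ n : ℤ, n ≠ l → ∀ f, RIsCocycleA P n f → RIsCoboundaryA P n f) ∧
    (∃ f₀, RIsCocycleA P l f₀ ∧ ¬ RIsCoboundaryA P l f₀ ∧
      ∀ f, RIsCocycleA P l f → ∃ c : k, RIsCoboundaryA P l (f - c • f₀))

/-! The coordinate functional of a top-level semibasis element `e` is a cocycle of
`Hom_{A^op}(P, A)`, because `d` maps every basis element into the span of strictly lower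
levels, which `e` does not meet. Since it sends `e` to `1` while, by minimality, every
coboundary lands in the augmentation ideal on all of `P`, it is not a coboundary.
Gorenstein vanishing outside degree `l` then forces `deg e = -l`, and one-dimensionality
in degree `l` rules out a second top-level generator, whose coordinate functional would
have to be proportional to that of `e` modulo coboundaries. -/

open MulOpposite

namespace RSFR

variable {𝔸 : DGA k} {ε : 𝔸.Aug}

section Coordinates

variable (P : RSFR ε)

noncomputable def coord (t : P.ι) : P.M →ₗ[k] 𝔸.A :=
  (opLinearEquiv k).symm.toLinearMap ∘ₗ (P.bas.coord t).restrictScalars k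

theorem coord_apply (t : P.ι) (m : P.M) : P.coord t m = unop (P.bas.repr m t) := rfl

theorem coord_op_smul (t : P.ι) (a : 𝔸.A) (m : P.M) :
    P.coord t (op a • m) = P.coord t m * a := by
  simp [coord_apply]

theorem coord_self (t : P.ι) : P.coord t (P.bas t) = 1 := by
  simp [coord_apply]

theorem coord_of_ne {s t : P.ι} (h : s ≠ t) : P.coord t (P.bas s) = 0 := by
  simp [coord_apply, Finsupp.single_eq_of_ne h.symm]

@[elab_as_elim]
theorem induction_on_homogeneous {motive : P.M → Prop} (m : P.M) (zero : motive 0)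
    (add : ∀ x y, motive x → motive y → motive (x + y))
    (op_smul_basis : ∀ (p : ℤ) (a : 𝔸.A), a ∈ 𝔸.grading p → ∀ t, motive (op a • P.bas t)) :
    motive m := by
  have hterm (a : 𝔸.A) (t : P.ι) : motive (op a • P.bas t) := by
    induction a using DirectSum.Decomposition.inductionOn 𝔸.grading with
    | zero => simpa using zero
    | homogeneous a => exact op_smul_basis _ _ a.2 t
    | add a b ha hb => simpa [add_smul] using add _ _ ha hb
  rw [← P.bas.linearCombination_repr m, Finsupp.linearCombination_apply]
  exact Finset.sum_induction _ motive add zero fun t _ => by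
    simpa using hterm (unop (P.bas.repr m t)) t

theorem coord_decompose (t : P.ι) (j : ℤ) (m : P.M) :
    P.coord t (DirectSum.decompose P.grading m j) =
      GradedAlgebra.proj 𝔸.grading (j - P.degB t) (P.coord t m) := by
  induction m using P.induction_on_homogeneous with
  | zero => simp
  | add x y hx hy => simp [hx, hy]
  | op_smul_basis p a ha s =>
    have hdec : (DirectSum.decompose P.grading (op a • P.bas s) j : P.M) =
        if P.degB s + p = j then op a • P.bas s else 0 := by
      have hmem := P.smul_mem p (P.degB s) a _ ha (P.homog s)
      split_ifs with hj
      · exact hj ▸ DirectSum.decompose_of_mem_same _ hmem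
      · exact DirectSum.decompose_of_mem_ne _ hmem hj
    by_cases hs : s = t
    · subst hs
      have hproj : GradedAlgebra.proj 𝔸.grading (j - P.degB s) a =
          if P.degB s + p = j then a else 0 := by
        rw [GradedAlgebra.proj_apply]
        split_ifs with hj
        · exact DirectSum.decompose_of_mem_same _ (by rwa [← hj, add_sub_cancel_left])
        · exact DirectSum.decompose_of_mem_ne _ ha (by omega)
      rw [hdec, coord_op_smul, coord_self, one_mul, hproj]
      split_ifs <;> simp [coord_op_smul, coord_self]
    · rw [hdec]
      split_ifs <;> simp [coord_op_smul, coord_of_ne _ hs]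

theorem coord_mem_grading (t : P.ι) {j : ℤ} {m : P.M} (hm : m ∈ P.grading j) :
    P.coord t m ∈ 𝔸.grading (j - P.degB t) := by
  rw [← DirectSum.decompose_of_mem_same _ hm, coord_decompose, GradedAlgebra.proj_apply]
  exact SetLike.coe_mem _

theorem coord_dM_basis_of_lvl_le {i : P.ι} (hmax : ∀ t, P.lvl t ≤ P.lvl i) (t : P.ι) :
    P.coord i (P.dM (P.bas t)) = 0 := by
  have hlower : Submodule.span 𝔸.Aᵐᵒᵖ (P.bas '' {j | P.lvl j < P.lvl t}) ≤
      LinearMap.ker (P.bas.coord i) := by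
    rw [Submodule.span_le]
    rintro _ ⟨s, hs, rfl⟩
    have hsi : s ≠ i := by
      rintro rfl
      exact (hs.trans_le (hmax t)).false
    simp [Finsupp.single_eq_of_ne hsi.symm]
  rw [coord_apply, ← Module.Basis.coord_apply, LinearMap.mem_ker.mp (hlower (P.d_lvl t)),
    unop_zero]

theorem coord_isCocycle {i : P.ι} (hmax : ∀ t, P.lvl t ≤ P.lvl i) :
    RIsCocycleA P (-P.degB i) (P.coord i) := by
  refine ⟨P.coord_op_smul i, fun j m hm => ?_, fun m => ?_⟩
  · simpa [sub_eq_add_neg] using P.coord_mem_grading i hm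
  induction m using P.induction_on_homogeneous with
  | zero => simp
  | add x y hx hy => simp [hx, hy]
  | op_smul_basis p a ha t =>
    rw [P.leibniz p (P.degB t) a _ ha (P.homog t)]
    by_cases ht : t = i
    · subst ht
      have hsign : (Int.negOnePow (-P.degB t) : ℤ) * (Int.negOnePow (P.degB t) : ℤ) = 1 := by
        rw [← Units.val_mul, ← Int.negOnePow_add]
        simp
      simp only [map_add, map_zsmul, coord_op_smul, coord_self, P.coord_dM_basis_of_lvl_le hmax,
        zero_mul, zero_add, one_mul, smul_smul, hsign, one_smul]
    · simp [coord_op_smul, coord_of_ne _ ht, P.coord_dM_basis_of_lvl_le hmax]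

end Coordinates

namespace RMinimal

variable {P : RSFR ε} (hmin : P.RMinimal)
include hmin

theorem augmentation_apply_dM {g : P.M →ₗ[k] 𝔸.A}
    (hg : ∀ (a : 𝔸.A) (m : P.M), g (op a • m) = g m * a) (m : P.M) :
    ε.ε (g (P.dM m)) = 0 := by
  have hdm := hmin m
  generalize P.dM m = x at hdm ⊢
  induction hdm using Submodule.span_induction with
  | mem x hx =>
    obtain ⟨b, m', hb, rfl⟩ := hx
    simp [hg, hb]
  | zero => simp
  | add x y _ _ hx hy => simp [hx, hy]
  | smul c x _ hx =>
    rw [← op_unop c, hg, map_mul, hx, zero_mul]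

theorem augmentation_eq_zero_of_isCoboundary {n : ℤ} {f : P.M →ₗ[k] 𝔸.A}
    (hf : RIsCoboundaryA P n f) (m : P.M) : ε.ε (f m) = 0 := by
  obtain ⟨g, hg, -, hfg⟩ := hf
  simp [hfg, ε.ε_d, hmin.augmentation_apply_dM hg]

theorem not_isCoboundary_coord (n : ℤ) (t : P.ι) : ¬ RIsCoboundaryA P n (P.coord t) :=
  fun h => by simpa [coord_self] using hmin.augmentation_eq_zero_of_isCoboundary h (P.bas t)

theorem augmentation_apply_eq_of_isCoboundary_sub {n : ℤ} {f f₀ : P.M →ₗ[k] 𝔸.A} {c : k}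
    (h : RIsCoboundaryA P n (f - c • f₀)) (m : P.M) : ε.ε (f m) = c * ε.ε (f₀ m) := by
  simpa [sub_eq_zero] using hmin.augmentation_eq_zero_of_isCoboundary h m

theorem eq_of_isCocycle_coord {l : ℤ} {f₀ : P.M →ₗ[k] 𝔸.A}
    (hone : ∀ f, RIsCocycleA P l f → ∃ c : k, RIsCoboundaryA P l (f - c • f₀))
    {i j : P.ι} (hi : RIsCocycleA P l (P.coord i)) (hj : RIsCocycleA P l (P.coord j)) :
    i = j := by
  by_contra hne
  obtain ⟨ci, hci⟩ := hone _ hi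
  obtain ⟨cj, hcj⟩ := hone _ hj
  have hii := hmin.augmentation_apply_eq_of_isCoboundary_sub hci (P.bas i)
  have hij := hmin.augmentation_apply_eq_of_isCoboundary_sub hci (P.bas j)
  have hjj := hmin.augmentation_apply_eq_of_isCoboundary_sub hcj (P.bas j)
  simp only [coord_self, coord_of_ne _ (Ne.symm hne), map_one, map_zero] at hii hij hjj
  have hci0 : ci ≠ 0 := by rintro rfl; simp at hii
  have hf₀j : ε.ε (f₀ (P.bas j)) = 0 := by simpa [hci0] using hij.symm
  simp [hf₀j] at hjj

end RMinimal

end RSFR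

theorem top_layer_of_gorenstein_resolution_general (𝔸 : DGA k)
    (ε : 𝔸.Aug) (l : ℤ) (hGor : RightGorAt ε l)
    (P : RSFR ε) (hmin : P.RMinimal) (N : ℕ)
    (hbd : ∀ i, P.lvl i ≤ N) :
    (∀ i j, P.lvl i = N → P.lvl j = N → i = j) ∧
    (∀ i, P.lvl i = N → P.degB i = -l) := by
  have hcocycle : ∀ i, P.lvl i = N → RIsCocycleA P (-P.degB i) (P.coord i) :=
    fun i hi => P.coord_isCocycle fun t => hi ▸ hbd t
  have hdeg : ∀ i, P.lvl i = N → P.degB i = -l := fun i hi => by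
    by_contra hne
    exact hmin.not_isCoboundary_coord _ i ((hGor P).1 _ (by omega) _ (hcocycle i hi))
  have hcocycle_l : ∀ i, P.lvl i = N → RIsCocycleA P l (P.coord i) := fun i hi => by
    simpa [hdeg i hi] using hcocycle i hi
  obtain ⟨f₀, -, -, hone⟩ := (hGor P).2
  exact ⟨fun i j hi hj => hmin.eq_of_isCocycle_coord hone (hcocycle_l i hi) (hcocycle_l j hj),
    hdeg⟩

/-- Let `A` be a connected DG algebra which is right AS-Gorenstein
with `RHom_{A^op}(k, A) ≅ s^l k`, and let `P → k` be a minimal semifree resolution of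
the trivial right DG module `k` with finite semifree filtration
`0 ⊆ P(0) ⊆ ⋯ ⊆ P(N) = P`, `P(N)/P(N-1) ≠ 0` (the filtration encoded by the level
function of the semibasis).  Then the top subquotient `P(N)/P(N-1) ≅ A[-l]` is free of
rank one on a single generator of degree `-l`. -/
theorem top_layer_of_gorenstein_resolution (𝔸 : DGA k) (hconn : 𝔸.connected)
    (ε : 𝔸.Aug) (l : ℤ) (hGor : RightGorAt ε l)
    (P : RSFR ε) (hmin : P.RMinimal) (N : ℕ)
    (hbd : ∀ i, P.lvl i ≤ N) (htop : ∃ i, P.lvl i = N) :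
    (∀ i j, P.lvl i = N → P.lvl j = N → i = j) ∧
    (∀ i, P.lvl i = N → P.degB i = -l) :=
  top_layer_of_gorenstein_resolution_general 𝔸 ε l hGor P hmin N hbd
end
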